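/- Let (a_j)_{j∈ℕ} be a sequence of elements of ℓ²(ℕ, ℂ) satisfying Σ_{j=0}^∞ ‖a_j‖ < ∞ and Σ_{j=0}^∞ (j + 1)·‖a_j‖² < ∞, let A : ℓ²(ℕ, ℂ) → ℓ²(ℕ × ℕ, ℂ) be the block Hankel operator (A x)(k, p) = Σ_q a_{k, p+q}·x_q, and let Q = A A*. Then Q is a self-adjoint compact positive operator; for every P > 0, the supremum of ⟨Q g, g⟩ over all g ∈ ℓ²(ℕ × ℕ, ℂ) with ‖g‖² ≤ P is attained and equals P·ν², where ν² = ‖Q‖ is the greatest eigenvalue of Q; and ν² = lim_{N→∞} ν_N², where ν_N² = ‖A_N A_N*‖ for the truncations A_N of A (blocks a_{p+q} for p + q ≤ N, zero otherwise). -/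

import Mathlib

/-!
`Q = A A†` is positive. The truncations `A_N` have finite rank, and `A - A_N` has
Hilbert–Schmidt norm `Σ_{p+q>N} ‖a_{p+q}‖² = Σ_{n>N} (n+1) ‖a_n‖²`, which tends to `0`; so `A`,
hence `Q`, is compact, and `‖A_N A_N†‖ = ‖A_N‖² → ‖A‖² = ‖Q‖`. For a positive operator `‖Q‖` is
the supremum of the Rayleigh quotient, so it lies in the spectrum; for a compact operator a nonzero
point of the spectrum is an eigenvalue (Fredholm alternative). An eigenvector rescaled to norm
`√P` attains the bound `re ⟪Q g, g⟫ ≤ ‖Q‖ ‖g‖²`.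
-/

open Filter Topology Module End
open scoped InnerProductSpace ComplexConjugate

theorem hasSum_prod_of_nonneg {β γ : Type*} {f : β × γ → ℝ} (hf : ∀ z, 0 ≤ f z) {g : β → ℝ}
    (hg : ∀ b, HasSum (fun c => f (b, c)) (g b)) {a : ℝ} (ha : HasSum g a) : HasSum f a := by
  have hs : Summable f := (summable_prod_of_nonneg hf).2
    ⟨fun b => (hg b).summable, ha.summable.congr fun b => (hg b).tsum_eq.symm⟩
  rw [ha.unique (hs.hasSum.prod_fiberwise hg)]
  exact hs.hasSum

theorem summable_prod_comp_add {c : ℕ → ℝ} (hc : ∀ n, 0 ≤ c n)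
    (h : Summable fun n : ℕ => ((n : ℝ) + 1) * c n) :
    Summable fun z : ℕ × ℕ => c (z.1 + z.2) := by
  rw [← Finset.HasAntidiagonal.sigmaAntidiagonalEquivProd.summable_iff]
  have hfib (x : Σ n : ℕ, Finset.HasAntidiagonal.antidiagonal n) :
      c ((Finset.HasAntidiagonal.sigmaAntidiagonalEquivProd x).1 +
        (Finset.HasAntidiagonal.sigmaAntidiagonalEquivProd x).2) = c x.1 := by
    obtain ⟨n, z, hz⟩ := x
    simp [Finset.HasAntidiagonal.mem_antidiagonal.1 hz]
  simp only [Function.comp_def, hfib]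
  refine (summable_sigma_of_nonneg fun _ => hc _).2 ⟨fun _ => .of_finite, ?_⟩
  simpa [Finset.tsum_subtype (f := fun _ => c _), Finset.Nat.card_antidiagonal] using h

namespace ContinuousLinearMap

variable {𝕜 E : Type*} [RCLike 𝕜] [NormedAddCommGroup E] [InnerProductSpace 𝕜 E]
  {T : E →L[𝕜] E}

-- If `‖T‖` were in the resolvent set, the (nonnegative) Rayleigh quotient would stay `ε` below
-- its supremum `‖T‖`.
theorem IsPositive.algebraMap_norm_mem_spectrum [Nontrivial E] (hT : T.IsPositive) :
    algebraMap ℝ 𝕜 ‖T‖ ∈ spectrum 𝕜 T := by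
  by_contra h
  obtain ⟨ε, hε, hle⟩ := T.rayleighQuotient_le_of_norm_mem_resolventSet (Set.notMem_compl_iff.mp h)
  have habs : ∀ x, |T.rayleighQuotient x| ≤ ‖T‖ - ε := fun x => by
    rw [abs_of_nonneg (div_nonneg (hT.2 x) (sq_nonneg _))]
    exact hle x
  linarith [ciSup_le habs, T.norm_eq_iSup_rayleighQuotient hT.isSymmetric]

theorem IsPositive.hasEigenvalue_norm [CompleteSpace E] [Nontrivial E] (hT : T.IsPositive)
    (hc : IsCompactOperator T) : HasEigenvalue (T : End 𝕜 E) (‖T‖ : 𝕜) := by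
  rcases eq_or_ne T 0 with rfl | hT0
  · obtain ⟨v, hv⟩ := exists_ne (0 : E)
    exact hasEigenvalue_of_hasEigenvector ⟨mem_eigenspace_iff.2 (by simp), hv⟩
  rw [hc.hasEigenvalue_iff_mem_spectrum (by simpa using hT0), ← RCLike.algebraMap_eq_ofReal]
  exact hT.algebraMap_norm_mem_spectrum

theorem reApplyInnerSelf_le_norm_mul_sq (x : E) : T.reApplyInnerSelf x ≤ ‖T‖ * ‖x‖ ^ 2 :=
  calc T.reApplyInnerSelf x ≤ ‖T x‖ * ‖x‖ := re_inner_le_norm _ _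
    _ ≤ ‖T‖ * ‖x‖ * ‖x‖ := by gcongr; exact T.le_opNorm x
    _ = ‖T‖ * ‖x‖ ^ 2 := by ring

theorem reApplyInnerSelf_of_apply_eq_smul {v : E} {μ : ℝ} (hv : T v = (μ : 𝕜) • v) :
    T.reApplyInnerSelf v = μ * ‖v‖ ^ 2 := by
  simp [reApplyInnerSelf_apply, hv, inner_smul_left, inner_self_eq_norm_sq_to_K]

theorem isGreatest_reApplyInnerSelf {v : E} (hv0 : v ≠ 0) (hv : T v = (‖T‖ : 𝕜) • v)
    {P : ℝ} (hP : 0 ≤ P) :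
    IsGreatest {r | ∃ g : E, ‖g‖ ^ 2 ≤ P ∧ r = T.reApplyInnerSelf g} (P * ‖T‖) := by
  have hv' : 0 < ‖v‖ := norm_pos_iff.2 hv0
  have hnorm : ‖((√P / ‖v‖ : ℝ) : 𝕜)‖ ^ 2 * ‖v‖ ^ 2 = P := by
    rw [RCLike.norm_ofReal, abs_of_nonneg (by positivity), div_pow, Real.sq_sqrt hP,
      div_mul_cancel₀ _ (by positivity)]
  refine ⟨⟨((√P / ‖v‖ : ℝ) : 𝕜) • v, ?_, ?_⟩, ?_⟩
  · rw [norm_smul, mul_pow, hnorm]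
  · rw [T.reApplyInnerSelf_smul, reApplyInnerSelf_of_apply_eq_smul hv]
    linear_combination -‖T‖ * hnorm
  · rintro r ⟨g, hg, rfl⟩
    calc T.reApplyInnerSelf g ≤ ‖T‖ * ‖g‖ ^ 2 := T.reApplyInnerSelf_le_norm_mul_sq g
      _ ≤ P * ‖T‖ := by rw [mul_comm]; gcongr

theorem norm_self_comp_adjoint {F : Type*} [CompleteSpace E] [NormedAddCommGroup F]
    [InnerProductSpace 𝕜 F] [CompleteSpace F] (B : E →L[𝕜] F) :
    ‖B ∘L adjoint B‖ = ‖B‖ * ‖B‖ := by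
  simpa using (adjoint B).norm_adjoint_comp_self

end ContinuousLinearMap

namespace lp

variable {𝕜 : Type*} [RCLike 𝕜]

instance nontrivial_of_nonempty {α : Type*} [Nonempty α] {p : ENNReal} :
    Nontrivial (lp (fun _ : α => 𝕜) p) := by
  classical
  obtain ⟨i⟩ := ‹Nonempty α›
  exact nontrivial_of_ne (lp.single p i 1) 0 fun h => by simpa using congrArg (fun f => f i) h

theorem hasSum_norm_sq {α : Type*} {E : α → Type*} [∀ i, NormedAddCommGroup (E i)]
    (f : lp E 2) : HasSum (fun i => ‖f i‖ ^ 2) (‖f‖ ^ 2) := by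
  simpa using lp.hasSum_norm (p := 2) (by simp) f

theorem exists_hasSum_mul_eq_inner {κ : Type*} {k : κ → 𝕜} {s : ℝ}
    (hk : HasSum (fun j => ‖k j‖ ^ 2) s) :
    ∃ y : lp (fun _ : κ => 𝕜) 2, ‖y‖ ^ 2 = s ∧
      ∀ x : lp (fun _ : κ => 𝕜) 2, HasSum (fun j => k j * x j) ⟪y, x⟫_𝕜 := by
  have hmem : Memℓp (fun j => conj (k j)) 2 := memℓp_gen (by
    simp only [ENNReal.toReal_ofNat, Real.rpow_two, RCLike.norm_conj]
    exact hk.summable)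
  let y : lp (fun _ : κ => 𝕜) 2 := ⟨fun j => conj (k j), hmem⟩
  have hy j : y j = conj (k j) := rfl
  have hnorm : HasSum (fun j => ‖y j‖ ^ 2) s := by simpa only [hy, RCLike.norm_conj] using hk
  refine ⟨y, (hasSum_norm_sq y).unique hnorm, fun x => ?_⟩
  simpa only [hy, RCLike.inner_apply, RCLike.conj_conj, mul_comm] using
    lp.hasSum_inner (𝕜 := 𝕜) y x

theorem opNorm_le_sqrt_of_hasSum_norm_sq {ι κ : Type*}
    {B : lp (fun _ : κ => 𝕜) 2 →L[𝕜] lp (fun _ : ι => 𝕜) 2} {K : ι → κ → 𝕜} {t : ℝ}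
    (hK : HasSum (fun z : ι × κ => ‖K z.1 z.2‖ ^ 2) t)
    (hB : ∀ x i, HasSum (fun j => K i j * x j) (B x i)) : ‖B‖ ≤ √t := by
  have hrow i : HasSum (fun j => ‖K i j‖ ^ 2) (∑' j, ‖K i j‖ ^ 2) :=
    (hK.summable.prod_factor i).hasSum
  refine B.opNorm_le_bound (Real.sqrt_nonneg t) fun x => ?_
  have hentry i : ‖B x i‖ ^ 2 ≤ (∑' j, ‖K i j‖ ^ 2) * ‖x‖ ^ 2 := by
    obtain ⟨y, hy, hyx⟩ := exists_hasSum_mul_eq_inner (hrow i)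
    rw [(hB x i).unique (hyx x), ← hy, ← mul_pow]
    exact pow_le_pow_left₀ (norm_nonneg _) (norm_inner_le_norm y x) 2
  have hsq : ‖B x‖ ^ 2 ≤ t * ‖x‖ ^ 2 :=
    hasSum_le hentry (hasSum_norm_sq (B x)) ((hK.prod_fiberwise hrow).mul_right _)
  refine (pow_le_pow_iff_left₀ (norm_nonneg _) (by positivity) two_ne_zero).1 ?_
  rwa [mul_pow, Real.sq_sqrt (hK.nonneg fun _ => sq_nonneg _)]

theorem isCompactOperator_of_forall_eq_zero {κ F : Type*} [NormedAddCommGroup F]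
    [NormedSpace 𝕜 F] {p : ENNReal} [Fact (1 ≤ p)] (B : lp (fun _ : κ => 𝕜) p →L[𝕜] F)
    (s : Finset κ) (hB : ∀ x : lp (fun _ : κ => 𝕜) p, (∀ j ∈ s, x j = 0) → B x = 0) :
    IsCompactOperator B := by
  classical
  let V := Submodule.span 𝕜 (Set.range fun j : s => B (lp.single p (j : κ) 1))
  have hV : ∀ x, B x ∈ V := by
    intro x
    have hx : B x = ∑ j ∈ s, x j • B (lp.single p j 1) := by
      have hrest : B (x - ∑ j ∈ s, lp.single p j (x j)) = 0 :=
        hB _ fun j hj => by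
          rw [lp.coeFn_sub, Pi.sub_apply, lp.coeFn_sum, Finset.sum_apply]
          simp [hj]
      rw [map_sub, sub_eq_zero] at hrest
      simp [hrest, ← map_smul, ← lp.single_smul]
    rw [hx]
    exact V.sum_mem fun j hj => V.smul_mem _ (Submodule.subset_span ⟨⟨j, hj⟩, rfl⟩)
  have : FiniteDimensional 𝕜 V := FiniteDimensional.span_of_finite 𝕜 (Set.finite_range _)
  exact (isCompactOperator_of_locallyCompactSpace_dom (B.codRestrict V hV)).clm_comp V.subtypeL

end lp

-- By counting the pairs on each antidiagonal, this is `Σ_{n>N} (n+1) c n`.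
noncomputable def hankelTail (c : ℕ → ℝ) (N : ℕ) : ℝ :=
  ∑' z : ℕ × ℕ, if N < z.1 + z.2 then c (z.1 + z.2) else 0

theorem tendsto_hankelTail {c : ℕ → ℝ} (hc : ∀ n, 0 ≤ c n)
    (h : Summable fun n : ℕ => ((n : ℝ) + 1) * c n) :
    Tendsto (hankelTail c) atTop (𝓝 0) := by
  have hlim (z : ℕ × ℕ) : Tendsto (fun N => if N < z.1 + z.2 then c (z.1 + z.2) else 0)
      atTop (𝓝 0) :=
    tendsto_const_nhds.congr' <| by
      filter_upwards [eventually_ge_atTop (z.1 + z.2)] with N hN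
      rw [if_neg hN.not_gt]
  have hbound : ∀ᶠ N in atTop, ∀ z : ℕ × ℕ,
      ‖if N < z.1 + z.2 then c (z.1 + z.2) else 0‖ ≤ c (z.1 + z.2) :=
    .of_forall fun N z => by split_ifs <;> simp [abs_of_nonneg, hc]
  have := tendsto_tsum_of_dominated_convergence (summable_prod_comp_add hc h) hlim hbound
  rwa [tsum_zero] at this

section Hankel

variable {a : ℕ → lp (fun _ : ℕ => ℂ) 2}
  {A : lp (fun _ : ℕ => ℂ) 2 →L[ℂ] lp (fun _ : ℕ × ℕ => ℂ) 2}

theorem summable_norm_sq_comp_add (ha : Summable fun j : ℕ => ((j : ℝ) + 1) * ‖a j‖ ^ 2) :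
    Summable fun z : ℕ × ℕ => ‖a (z.1 + z.2)‖ ^ 2 :=
  summable_prod_comp_add (c := fun j => ‖a j‖ ^ 2) (fun _ => sq_nonneg _) ha

theorem hasSum_hankel_apply (ha : Summable fun j : ℕ => ((j : ℝ) + 1) * ‖a j‖ ^ 2)
    (hA : ∀ (x : lp (fun _ : ℕ => ℂ) 2) (k p : ℕ), A x (k, p) = ∑' q : ℕ, a (p + q) k * x q)
    (x : lp (fun _ : ℕ => ℂ) 2) (k p : ℕ) :
    HasSum (fun q => a (p + q) k * x q) (A x (k, p)) := by
  have hrow : Summable fun q => ‖a (p + q) k‖ ^ 2 :=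
    ((summable_norm_sq_comp_add ha).prod_factor p).of_nonneg_of_le (fun _ => sq_nonneg _)
      fun q => pow_le_pow_left₀ (norm_nonneg _) (lp.norm_apply_le_norm two_ne_zero _ _) 2
  obtain ⟨y, -, hy⟩ := lp.exists_hasSum_mul_eq_inner hrow.hasSum
  rw [hA]
  exact (hy x).summable.hasSum

theorem norm_sub_hankelTruncation_le (ha : Summable fun j : ℕ => ((j : ℝ) + 1) * ‖a j‖ ^ 2)
    (hA : ∀ (x : lp (fun _ : ℕ => ℂ) 2) (k p : ℕ), A x (k, p) = ∑' q : ℕ, a (p + q) k * x q)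
    {B : lp (fun _ : ℕ => ℂ) 2 →L[ℂ] lp (fun _ : ℕ × ℕ => ℂ) 2} {N : ℕ}
    (hB : ∀ (x : lp (fun _ : ℕ => ℂ) 2) (k p : ℕ),
      B x (k, p) = ∑ q ∈ Finset.range (N + 1 - p), a (p + q) k * x q) :
    ‖A - B‖ ≤ √(hankelTail (fun j => ‖a j‖ ^ 2) N) := by
  set K : ℕ × ℕ → ℕ → ℂ := fun i q => if N < i.2 + q then a (i.2 + q) i.1 else 0
  refine lp.opNorm_le_sqrt_of_hasSum_norm_sq (K := K) ?_ ?_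
  -- Reorder `((k, p), q)` as `((p, q), k)`: the inner sum over `k` is then `‖a (p + q)‖ ^ 2`.
  · let e : (ℕ × ℕ) × ℕ ≃ (ℕ × ℕ) × ℕ :=
      { toFun z := ((z.1.2, z.2), z.1.1)
        invFun w := ((w.2, w.1.1), w.1.2)
        left_inv _ := rfl
        right_inv _ := rfl }
    let f : (ℕ × ℕ) × ℕ → ℝ := fun w =>
      if N < w.1.1 + w.1.2 then ‖a (w.1.1 + w.1.2) w.2‖ ^ 2 else 0
    have hf : HasSum f (hankelTail (fun j => ‖a j‖ ^ 2) N) := by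
      refine hasSum_prod_of_nonneg (fun w => by dsimp only [f]; split_ifs <;> positivity)
        (fun z => ?_) (Summable.hasSum ?_)
      · dsimp only [f]
        split_ifs
        exacts [lp.hasSum_norm_sq _, hasSum_zero]
      · refine (summable_norm_sq_comp_add ha).of_nonneg_of_le (fun z => ?_) (fun z => ?_) <;>
          split_ifs <;> first | positivity | rfl
    have hfe : (fun z : (ℕ × ℕ) × ℕ => ‖K z.1 z.2‖ ^ 2) = f ∘ e := by
      funext z
      simp only [K, f, e, Function.comp_apply, Equiv.coe_fn_mk]
      split_ifs <;> simp
    rw [hfe]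
    exact e.hasSum_iff.2 hf
  · rintro x ⟨k, p⟩
    have hBsum : HasSum (fun q => if q ∈ Finset.range (N + 1 - p) then a (p + q) k * x q else 0)
        (B x (k, p)) := by
      rw [hB, ← Finset.sum_congr rfl fun q hq => if_pos hq]
      exact hasSum_sum_of_ne_finset_zero fun q hq => if_neg hq
    have hK : (fun q => K (k, p) q * x q) = fun q => a (p + q) k * x q -
        if q ∈ Finset.range (N + 1 - p) then a (p + q) k * x q else 0 := by
      funext q
      simp only [K, Finset.mem_range]
      split_ifs <;> first | (exfalso; omega) | ring
    rw [hK]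
    exact (hasSum_hankel_apply ha hA x k p).sub hBsum

theorem tendsto_hankelTruncation (ha : Summable fun j : ℕ => ((j : ℝ) + 1) * ‖a j‖ ^ 2)
    (hA : ∀ (x : lp (fun _ : ℕ => ℂ) 2) (k p : ℕ), A x (k, p) = ∑' q : ℕ, a (p + q) k * x q)
    {AN : ℕ → (lp (fun _ : ℕ => ℂ) 2 →L[ℂ] lp (fun _ : ℕ × ℕ => ℂ) 2)}
    (hAN : ∀ (N : ℕ) (x : lp (fun _ : ℕ => ℂ) 2) (k p : ℕ),
      AN N x (k, p) = ∑ q ∈ Finset.range (N + 1 - p), a (p + q) k * x q) :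
    Tendsto AN atTop (𝓝 A) := by
  rw [tendsto_iff_norm_sub_tendsto_zero]
  have htail := (tendsto_hankelTail (fun _ => sq_nonneg _) ha).sqrt
  rw [Real.sqrt_zero] at htail
  refine squeeze_zero (fun _ => norm_nonneg _) (fun N => ?_) htail
  rw [norm_sub_rev]
  exact norm_sub_hankelTruncation_le ha hA (hAN N)

theorem isCompactOperator_hankelTruncation
    {B : lp (fun _ : ℕ => ℂ) 2 →L[ℂ] lp (fun _ : ℕ × ℕ => ℂ) 2} {N : ℕ}
    (hB : ∀ (x : lp (fun _ : ℕ => ℂ) 2) (k p : ℕ),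
      B x (k, p) = ∑ q ∈ Finset.range (N + 1 - p), a (p + q) k * x q) :
    IsCompactOperator B := by
  refine lp.isCompactOperator_of_forall_eq_zero B (Finset.range (N + 1)) fun x hx => ?_
  ext ⟨k, p⟩
  rw [hB, lp.coeFn_zero, Pi.zero_apply]
  refine Finset.sum_eq_zero fun q hq => ?_
  rw [hx q (by simp only [Finset.mem_range] at hq ⊢; omega), mul_zero]

end Hankel

theorem stmt_15_general (a : ℕ → lp (fun _ : ℕ => ℂ) 2)
    (ha2 : Summable fun j : ℕ => ((j : ℝ) + 1) * ‖a j‖ ^ 2)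
    (A : lp (fun _ : ℕ => ℂ) 2 →L[ℂ] lp (fun _ : ℕ × ℕ => ℂ) 2)
    (hA : ∀ (x : lp (fun _ : ℕ => ℂ) 2) (k p : ℕ),
      A x (k, p) = ∑' q : ℕ, a (p + q) k * x q)
    (AN : ℕ → (lp (fun _ : ℕ => ℂ) 2 →L[ℂ] lp (fun _ : ℕ × ℕ => ℂ) 2))
    (hAN : ∀ (N : ℕ) (x : lp (fun _ : ℕ => ℂ) 2) (k p : ℕ),
      AN N x (k, p) = ∑ q ∈ Finset.range (N + 1 - p), a (p + q) k * x q) :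
    IsSelfAdjoint (A ∘L ContinuousLinearMap.adjoint A) ∧
    IsCompactOperator (A ∘L ContinuousLinearMap.adjoint A) ∧
    (A ∘L ContinuousLinearMap.adjoint A).IsPositive ∧
    (∀ P : ℝ, 0 < P →
      IsGreatest
        {r : ℝ | ∃ g : lp (fun _ : ℕ × ℕ => ℂ) 2, ‖g‖ ^ 2 ≤ P ∧
          r = (A ∘L ContinuousLinearMap.adjoint A).reApplyInnerSelf g}
        (P * ‖A ∘L ContinuousLinearMap.adjoint A‖)) ∧
    (A ∘L ContinuousLinearMap.adjoint A ≠ 0 →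
      ∃ g : lp (fun _ : ℕ × ℕ => ℂ) 2, g ≠ 0 ∧
        (A ∘L ContinuousLinearMap.adjoint A) g
          = (‖A ∘L ContinuousLinearMap.adjoint A‖ : ℂ) • g) ∧
    Tendsto (fun N : ℕ => ‖AN N ∘L ContinuousLinearMap.adjoint (AN N)‖)
      atTop (nhds ‖A ∘L ContinuousLinearMap.adjoint A‖) := by
  have hlim : Tendsto AN atTop (𝓝 A) := tendsto_hankelTruncation ha2 hA hAN
  have hAc : IsCompactOperator A := isCompactOperator_of_tendsto hlim
    (.of_forall fun N => isCompactOperator_hankelTruncation (hAN N))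
  have hQc : IsCompactOperator (A ∘L ContinuousLinearMap.adjoint A) :=
    hAc.comp_clm (ContinuousLinearMap.adjoint A)
  have hQ := A.isPositive_self_comp_adjoint
  obtain ⟨g, hg_mem, hg0⟩ := (hQ.hasEigenvalue_norm hQc).exists_hasEigenvector
  have hQg := mem_eigenspace_iff.1 hg_mem
  refine ⟨hQ.isSelfAdjoint, hQc, hQ,
    fun P hP => ContinuousLinearMap.isGreatest_reApplyInnerSelf hg0 hQg hP.le,
    fun _ => ⟨g, hg0, hQg⟩, ?_⟩
  simp only [ContinuousLinearMap.norm_self_comp_adjoint]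
  exact hlim.norm.mul hlim.norm

/-- Under `Σ_j ‖a_j‖ < ∞` and `Σ_j (j+1)‖a_j‖² < ∞`, the operator
`Q = A A*` built from the block Hankel operator `A` is self-adjoint, compact and
positive; for every `P > 0` the supremum of `⟨Q g, g⟩` over `‖g‖² ≤ P` is attained
and equals `P·ν²` with `ν² = ‖Q‖`, which (when `Q ≠ 0`) is the greatest eigenvalue
of `Q`; and `ν² = lim_N ν_N²` where `ν_N² = ‖A_N A_N*‖` for the truncations `A_N`. -/
theorem stmt_15 (a : ℕ → lp (fun _ : ℕ => ℂ) 2)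
    (ha1 : Summable fun j : ℕ => ‖a j‖)
    (ha2 : Summable fun j : ℕ => ((j : ℝ) + 1) * ‖a j‖ ^ 2)
    (A : lp (fun _ : ℕ => ℂ) 2 →L[ℂ] lp (fun _ : ℕ × ℕ => ℂ) 2)
    (hA : ∀ (x : lp (fun _ : ℕ => ℂ) 2) (k p : ℕ),
      A x (k, p) = ∑' q : ℕ, a (p + q) k * x q)
    (AN : ℕ → (lp (fun _ : ℕ => ℂ) 2 →L[ℂ] lp (fun _ : ℕ × ℕ => ℂ) 2))
    (hAN : ∀ (N : ℕ) (x : lp (fun _ : ℕ => ℂ) 2) (k p : ℕ),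
      AN N x (k, p) = ∑ q ∈ Finset.range (N + 1 - p), a (p + q) k * x q) :
    IsSelfAdjoint (A ∘L ContinuousLinearMap.adjoint A) ∧
    IsCompactOperator (A ∘L ContinuousLinearMap.adjoint A) ∧
    (A ∘L ContinuousLinearMap.adjoint A).IsPositive ∧
    (∀ P : ℝ, 0 < P →
      IsGreatest
        {r : ℝ | ∃ g : lp (fun _ : ℕ × ℕ => ℂ) 2, ‖g‖ ^ 2 ≤ P ∧
          r = (A ∘L ContinuousLinearMap.adjoint A).reApplyInnerSelf g}
        (P * ‖A ∘L ContinuousLinearMap.adjoint A‖)) ∧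
    (A ∘L ContinuousLinearMap.adjoint A ≠ 0 →
      ∃ g : lp (fun _ : ℕ × ℕ => ℂ) 2, g ≠ 0 ∧
        (A ∘L ContinuousLinearMap.adjoint A) g
          = (‖A ∘L ContinuousLinearMap.adjoint A‖ : ℂ) • g) ∧
    Tendsto (fun N : ℕ => ‖AN N ∘L ContinuousLinearMap.adjoint (AN N)‖)
      atTop (nhds ‖A ∘L ContinuousLinearMap.adjoint A‖) :=
  stmt_15_general a ha2 A hA AN hAN
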